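/- Let μ ≠ 0 be real and A : U → ℝ a smooth function on a connected open set U ⊆ ℝ², with δ(x,y) = 1 + μ(x²+y²) > 0 on U, satisfying: (i) 2μ(x∂ₓA − y∂_yA) + δ∂²ₓA = 0, (ii) 2μ(y∂_yA − x∂ₓA) + δ∂²_yA = 0, and (iii) 2μ(x∂_yA + y∂ₓA) + δ∂ₓ∂_yA = 0 on U. Then A is constant on U. -/

import Mathlib

noncomputable section

def pdx (f : ℝ × ℝ → ℝ) (p : ℝ × ℝ) : ℝ := deriv (fun t => f (t, p.2)) p.1
def pdy (f : ℝ × ℝ → ℝ) (p : ℝ × ℝ) : ℝ := deriv (fun t => f (p.1, t)) p.2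

open Filter Topology Set

private def D1 (f : ℝ × ℝ → ℝ) : ℝ × ℝ → ℝ := fun q => fderiv ℝ f q (1, 0)
private def D2 (f : ℝ × ℝ → ℝ) : ℝ × ℝ → ℝ := fun q => fderiv ℝ f q (0, 1)

private lemma hasDerivAt_slice_x {f : ℝ × ℝ → ℝ} {x y : ℝ}
    (hf : DifferentiableAt ℝ f (x, y)) :
    HasDerivAt (fun t => f (t, y)) (D1 f (x, y)) x := by
  have h1 : HasFDerivAt f (fderiv ℝ f (x, y)) (x, y) := hf.hasFDerivAt
  have h2 : HasDerivAt (fun t : ℝ => ((t, y) : ℝ × ℝ)) ((1 : ℝ), (0 : ℝ)) x :=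
    (hasDerivAt_id x).prodMk (hasDerivAt_const x y)
  exact h1.comp_hasDerivAt x h2

private lemma hasDerivAt_slice_y {f : ℝ × ℝ → ℝ} {x y : ℝ}
    (hf : DifferentiableAt ℝ f (x, y)) :
    HasDerivAt (fun t => f (x, t)) (D2 f (x, y)) y := by
  have h1 : HasFDerivAt f (fderiv ℝ f (x, y)) (x, y) := hf.hasFDerivAt
  have h2 : HasDerivAt (fun t : ℝ => ((x, t) : ℝ × ℝ)) ((0 : ℝ), (1 : ℝ)) y :=
    (hasDerivAt_const y x).prodMk (hasDerivAt_id y)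
  exact h1.comp_hasDerivAt y h2

private lemma pdx_eq_D1 {f : ℝ × ℝ → ℝ} {p : ℝ × ℝ}
    (hf : DifferentiableAt ℝ f p) : pdx f p = D1 f p :=
  (hasDerivAt_slice_x (x := p.1) (y := p.2) hf).deriv

private lemma pdy_eq_D2 {f : ℝ × ℝ → ℝ} {p : ℝ × ℝ}
    (hf : DifferentiableAt ℝ f p) : pdy f p = D2 f p :=
  (hasDerivAt_slice_y (x := p.1) (y := p.2) hf).deriv

private lemma tendsto_slice_x {p : ℝ × ℝ} :
    Tendsto (fun t : ℝ => ((t, p.2) : ℝ × ℝ)) (𝓝 p.1) (𝓝 p) := by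
  have hc : Continuous (fun t : ℝ => ((t, p.2) : ℝ × ℝ)) :=
    continuous_id.prodMk continuous_const
  simpa using hc.tendsto p.1

private lemma tendsto_slice_y {p : ℝ × ℝ} :
    Tendsto (fun t : ℝ => ((p.1, t) : ℝ × ℝ)) (𝓝 p.2) (𝓝 p) := by
  have hc : Continuous (fun t : ℝ => ((p.1, t) : ℝ × ℝ)) :=
    continuous_const.prodMk continuous_id
  simpa using hc.tendsto p.2

private lemma pdx_congr {f g : ℝ × ℝ → ℝ} {p : ℝ × ℝ} (h : f =ᶠ[𝓝 p] g) :
    pdx f p = pdx g p := by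
  apply Filter.EventuallyEq.deriv_eq
  exact tendsto_slice_x.eventually h

private lemma pdy_congr {f g : ℝ × ℝ → ℝ} {p : ℝ × ℝ} (h : f =ᶠ[𝓝 p] g) :
    pdy f p = pdy g p := by
  apply Filter.EventuallyEq.deriv_eq
  exact tendsto_slice_y.eventually h

private lemma contDiffAt_D1 {f : ℝ × ℝ → ℝ} {p : ℝ × ℝ}
    (hf : ContDiffAt ℝ (⊤ : ℕ∞) f p) : ContDiffAt ℝ (⊤ : ℕ∞) (D1 f) p :=
  (hf.fderiv_right (by simp)).clm_apply contDiffAt_const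

private lemma contDiffAt_D2 {f : ℝ × ℝ → ℝ} {p : ℝ × ℝ}
    (hf : ContDiffAt ℝ (⊤ : ℕ∞) f p) : ContDiffAt ℝ (⊤ : ℕ∞) (D2 f) p :=
  (hf.fderiv_right (by simp)).clm_apply contDiffAt_const

private lemma fderiv_fderiv_apply {f : ℝ × ℝ → ℝ} {p : ℝ × ℝ}
    (hf : DifferentiableAt ℝ (fderiv ℝ f) p) (v w : ℝ × ℝ) :
    fderiv ℝ (fun q => fderiv ℝ f q v) p w = fderiv ℝ (fderiv ℝ f) p w v := by
  have h : HasFDerivAt (fun q => fderiv ℝ f q v)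
      ((ContinuousLinearMap.apply ℝ ℝ v).comp (fderiv ℝ (fderiv ℝ f) p)) p :=
    (ContinuousLinearMap.apply ℝ ℝ v).hasFDerivAt.comp p hf.hasFDerivAt
  rw [h.fderiv]
  rfl

private lemma symm2 {f : ℝ × ℝ → ℝ} {U : Set (ℝ × ℝ)} (hU : IsOpen U)
    (hf : ∀ q ∈ U, ContDiffAt ℝ (⊤ : ℕ∞) f q) {p : ℝ × ℝ} (hp : p ∈ U) (v w : ℝ × ℝ) :
    fderiv ℝ (fderiv ℝ f) p v w = fderiv ℝ (fderiv ℝ f) p w v := by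
  have hev : ∀ᶠ y in 𝓝 p, HasFDerivAt f (fderiv ℝ f y) y := by
    filter_upwards [hU.mem_nhds hp] with q hq
    exact ((hf q hq).differentiableAt (by simp)).hasFDerivAt
  exact second_derivative_symmetric_of_eventually hev
    (((hf p hp).fderiv_right (m := (⊤ : ℕ∞)) (by simp)).differentiableAt (by simp)).hasFDerivAt v w

private lemma swapD {f : ℝ × ℝ → ℝ} {U : Set (ℝ × ℝ)} (hU : IsOpen U)
    (hf : ∀ q ∈ U, ContDiffAt ℝ (⊤ : ℕ∞) f q) {p : ℝ × ℝ} (hp : p ∈ U) :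
    D1 (D2 f) p = D2 (D1 f) p := by
  have hdf : DifferentiableAt ℝ (fderiv ℝ f) p :=
    ((hf p hp).fderiv_right (m := (⊤ : ℕ∞)) (by simp)).differentiableAt (by simp)
  have h1 : D1 (D2 f) p = fderiv ℝ (fderiv ℝ f) p (1, 0) (0, 1) :=
    fderiv_fderiv_apply hdf (0, 1) (1, 0)
  have h2 : D2 (D1 f) p = fderiv ℝ (fderiv ℝ f) p (0, 1) (1, 0) :=
    fderiv_fderiv_apply hdf (1, 0) (0, 1)
  rw [h1, h2]
  exact symm2 hU hf hp _ _

theorem stmt5 (mu : ℝ) (hmu : mu ≠ 0)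
    (U : Set (ℝ × ℝ)) (hUopen : IsOpen U) (hUconn : IsConnected U)
    (del : ℝ × ℝ → ℝ) (hdel : ∀ p, del p = 1 + mu * (p.1 ^ 2 + p.2 ^ 2))
    (hpos : ∀ p ∈ U, del p > 0)
    (A : ℝ × ℝ → ℝ) (hA : ContDiffOn ℝ (⊤ : ℕ∞) A U)
    (h1 : ∀ p ∈ U, 2 * mu * (p.1 * pdx A p - p.2 * pdy A p) + del p * pdx (pdx A) p = 0)
    (h2 : ∀ p ∈ U, 2 * mu * (p.2 * pdy A p - p.1 * pdx A p) + del p * pdy (pdy A) p = 0)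
    (h3 : ∀ p ∈ U, 2 * mu * (p.1 * pdy A p + p.2 * pdx A p) + del p * pdx (pdy A) p = 0) :
    ∃ a : ℝ, ∀ p ∈ U, A p = a := by
  have hsm : ∀ p ∈ U, ContDiffAt ℝ (⊤ : ℕ∞) A p := fun p hp => hA.contDiffAt (hUopen.mem_nhds hp)
  have hsm1 : ∀ p ∈ U, ContDiffAt ℝ (⊤ : ℕ∞) (D1 A) p := fun p hp => contDiffAt_D1 (hsm p hp)
  have hsm2 : ∀ p ∈ U, ContDiffAt ℝ (⊤ : ℕ∞) (D2 A) p := fun p hp => contDiffAt_D2 (hsm p hp)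
  have hsm11 : ∀ p ∈ U, ContDiffAt ℝ (⊤ : ℕ∞) (D1 (D1 A)) p := fun p hp => contDiffAt_D1 (hsm1 p hp)
  have hsm21 : ∀ p ∈ U, ContDiffAt ℝ (⊤ : ℕ∞) (D1 (D2 A)) p := fun p hp => contDiffAt_D1 (hsm2 p hp)
  have hsm22 : ∀ p ∈ U, ContDiffAt ℝ (⊤ : ℕ∞) (D2 (D2 A)) p := fun p hp => contDiffAt_D2 (hsm2 p hp)
  -- conversions of pdx/pdy to D1/D2
  have hpdx : ∀ q ∈ U, pdx A q = D1 A q :=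
    fun q hq => pdx_eq_D1 ((hsm q hq).differentiableAt (by simp))
  have hpdy : ∀ q ∈ U, pdy A q = D2 A q :=
    fun q hq => pdy_eq_D2 ((hsm q hq).differentiableAt (by simp))
  have hpdxx : ∀ q ∈ U, pdx (pdx A) q = D1 (D1 A) q := by
    intro q hq
    have hcong : pdx (pdx A) q = pdx (D1 A) q :=
      pdx_congr ((Set.EqOn.eventuallyEq_of_mem (fun r hr => hpdx r hr)
        (hUopen.mem_nhds hq)))
    rw [hcong]
    exact pdx_eq_D1 ((hsm1 q hq).differentiableAt (by simp))
  have hpdxy : ∀ q ∈ U, pdx (pdy A) q = D1 (D2 A) q := by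
    intro q hq
    have hcong : pdx (pdy A) q = pdx (D2 A) q :=
      pdx_congr ((Set.EqOn.eventuallyEq_of_mem (fun r hr => hpdy r hr)
        (hUopen.mem_nhds hq)))
    rw [hcong]
    exact pdx_eq_D1 ((hsm2 q hq).differentiableAt (by simp))
  have hpdyy : ∀ q ∈ U, pdy (pdy A) q = D2 (D2 A) q := by
    intro q hq
    have hcong : pdy (pdy A) q = pdy (D2 A) q :=
      pdy_congr ((Set.EqOn.eventuallyEq_of_mem (fun r hr => hpdy r hr)
        (hUopen.mem_nhds hq)))
    rw [hcong]
    exact pdy_eq_D2 ((hsm2 q hq).differentiableAt (by simp))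
  -- equations in terms of D1 and D2
  have E1 : ∀ q ∈ U, 2 * mu * (q.1 * D1 A q - q.2 * D2 A q) + del q * D1 (D1 A) q = 0 := by
    intro q hq
    have := h1 q hq
    rwa [hpdx q hq, hpdy q hq, hpdxx q hq] at this
  have E2 : ∀ q ∈ U, 2 * mu * (q.2 * D2 A q - q.1 * D1 A q) + del q * D2 (D2 A) q = 0 := by
    intro q hq
    have := h2 q hq
    rwa [hpdy q hq, hpdx q hq, hpdyy q hq] at this
  have E3 : ∀ q ∈ U, 2 * mu * (q.1 * D2 A q + q.2 * D1 A q) + del q * D1 (D2 A) q = 0 := by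
    intro q hq
    have := h3 q hq
    rwa [hpdy q hq, hpdx q hq, hpdxy q hq] at this
  have hswapA : ∀ q ∈ U, D1 (D2 A) q = D2 (D1 A) q :=
    fun q hq => swapD hUopen hsm hq
  -- the key step : both first partial derivatives vanish on U
  have key : ∀ p ∈ U, D1 A p = 0 ∧ D2 A p = 0 := by
    rintro ⟨x, y⟩ hp
    have hU2 : ∀ᶠ t in 𝓝 y, ((x, t) : ℝ × ℝ) ∈ U :=
      (tendsto_slice_y (p := ((x, y) : ℝ × ℝ))).eventually
        (hUopen.eventually_mem hp)
    have hU1 : ∀ᶠ t in 𝓝 x, ((t, y) : ℝ × ℝ) ∈ U :=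
      (tendsto_slice_x (p := ((x, y) : ℝ × ℝ))).eventually
        (hUopen.eventually_mem hp)
    -- slice derivatives
    have hP : HasDerivAt (fun t => D1 A (x, t)) (D2 (D1 A) (x, y)) y :=
      hasDerivAt_slice_y ((hsm1 _ hp).differentiableAt (by simp))
    have hQ : HasDerivAt (fun t => D2 A (x, t)) (D2 (D2 A) (x, y)) y :=
      hasDerivAt_slice_y ((hsm2 _ hp).differentiableAt (by simp))
    have hPx : HasDerivAt (fun t => D1 A (t, y)) (D1 (D1 A) (x, y)) x :=
      hasDerivAt_slice_x ((hsm1 _ hp).differentiableAt (by simp))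
    have hQx : HasDerivAt (fun t => D2 A (t, y)) (D1 (D2 A) (x, y)) x :=
      hasDerivAt_slice_x ((hsm2 _ hp).differentiableAt (by simp))
    have ha11y : HasDerivAt (fun t => D1 (D1 A) (x, t)) (D2 (D1 (D1 A)) (x, y)) y :=
      hasDerivAt_slice_y ((hsm11 _ hp).differentiableAt (by simp))
    have ha21y : HasDerivAt (fun t => D1 (D2 A) (x, t)) (D2 (D1 (D2 A)) (x, y)) y :=
      hasDerivAt_slice_y ((hsm21 _ hp).differentiableAt (by simp))
    have ha21x : HasDerivAt (fun t => D1 (D2 A) (t, y)) (D1 (D1 (D2 A)) (x, y)) x :=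
      hasDerivAt_slice_x ((hsm21 _ hp).differentiableAt (by simp))
    have ha22x : HasDerivAt (fun t => D2 (D2 A) (t, y)) (D1 (D2 (D2 A)) (x, y)) x :=
      hasDerivAt_slice_x ((hsm22 _ hp).differentiableAt (by simp))
    -- derivative of the conformal factor along slices
    have hdely : HasDerivAt (fun t => del (x, t)) (mu * (2 * y)) y := by
      have hfun : (fun t => del (x, t)) = fun t => 1 + mu * (x ^ 2 + t ^ 2) :=
        funext fun t => hdel (x, t)
      rw [hfun]
      have hpow : HasDerivAt (fun t : ℝ => t ^ 2) (2 * y) y := by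
        simpa using hasDerivAt_pow 2 y
      exact ((hpow.const_add (x ^ 2)).const_mul mu).const_add 1
    have hdelx : HasDerivAt (fun t => del (t, y)) (mu * (2 * x)) x := by
      have hfun : (fun t => del (t, y)) = fun t => 1 + mu * (t ^ 2 + y ^ 2) :=
        funext fun t => hdel (t, y)
      rw [hfun]
      have hpow : HasDerivAt (fun t : ℝ => t ^ 2) (2 * x) x := by
        simpa using hasDerivAt_pow 2 x
      have : HasDerivAt (fun t : ℝ => t ^ 2 + y ^ 2) (2 * x) x :=
        hpow.add_const (y ^ 2)
      exact (this.const_mul mu).const_add 1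
    -- differentiate E1 in the y-direction
    have hF1 : HasDerivAt
        (fun t => 2 * mu * (x * D1 A (x, t) - t * D2 A (x, t)) + del (x, t) * D1 (D1 A) (x, t))
        (2 * mu * (x * D2 (D1 A) (x, y) - (1 * D2 A (x, y) + y * D2 (D2 A) (x, y))) +
          (mu * (2 * y) * D1 (D1 A) (x, y) + del (x, y) * D2 (D1 (D1 A)) (x, y))) y :=
      (((hP.const_mul x).sub ((hasDerivAt_id y).mul hQ)).const_mul (2 * mu)).add
        (hdely.mul ha11y)
    have hD1eq : 2 * mu * (x * D2 (D1 A) (x, y) - (1 * D2 A (x, y) + y * D2 (D2 A) (x, y))) +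
          (mu * (2 * y) * D1 (D1 A) (x, y) + del (x, y) * D2 (D1 (D1 A)) (x, y)) = 0 := by
      have he : (fun t => 2 * mu * (x * D1 A (x, t) - t * D2 A (x, t)) +
          del (x, t) * D1 (D1 A) (x, t)) =ᶠ[𝓝 y] (fun _ => (0 : ℝ)) := by
        filter_upwards [hU2] with t ht using E1 (x, t) ht
      have h0 := he.deriv_eq
      rw [hF1.deriv] at h0
      simpa using h0
    -- differentiate E3 in the x-direction
    have hF2 : HasDerivAt
        (fun t => 2 * mu * (t * D2 A (t, y) + y * D1 A (t, y)) + del (t, y) * D1 (D2 A) (t, y))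
        (2 * mu * ((1 * D2 A (x, y) + x * D1 (D2 A) (x, y)) + y * D1 (D1 A) (x, y)) +
          (mu * (2 * x) * D1 (D2 A) (x, y) + del (x, y) * D1 (D1 (D2 A)) (x, y))) x :=
      ((((hasDerivAt_id x).mul hQx).add (hPx.const_mul y)).const_mul (2 * mu)).add
        (hdelx.mul ha21x)
    have hD2eq : 2 * mu * ((1 * D2 A (x, y) + x * D1 (D2 A) (x, y)) + y * D1 (D1 A) (x, y)) +
          (mu * (2 * x) * D1 (D2 A) (x, y) + del (x, y) * D1 (D1 (D2 A)) (x, y)) = 0 := by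
      have he : (fun t => 2 * mu * (t * D2 A (t, y) + y * D1 A (t, y)) +
          del (t, y) * D1 (D2 A) (t, y)) =ᶠ[𝓝 x] (fun _ => (0 : ℝ)) := by
        filter_upwards [hU1] with t ht using E3 (t, y) ht
      have h0 := he.deriv_eq
      rw [hF2.deriv] at h0
      simpa using h0
    -- differentiate E3 in the y-direction
    have hF3 : HasDerivAt
        (fun t => 2 * mu * (x * D2 A (x, t) + t * D1 A (x, t)) + del (x, t) * D1 (D2 A) (x, t))
        (2 * mu * (x * D2 (D2 A) (x, y) + (1 * D1 A (x, y) + y * D2 (D1 A) (x, y))) +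
          (mu * (2 * y) * D1 (D2 A) (x, y) + del (x, y) * D2 (D1 (D2 A)) (x, y))) y :=
      (((hQ.const_mul x).add ((hasDerivAt_id y).mul hP)).const_mul (2 * mu)).add
        (hdely.mul ha21y)
    have hD3eq : 2 * mu * (x * D2 (D2 A) (x, y) + (1 * D1 A (x, y) + y * D2 (D1 A) (x, y))) +
          (mu * (2 * y) * D1 (D2 A) (x, y) + del (x, y) * D2 (D1 (D2 A)) (x, y)) = 0 := by
      have he : (fun t => 2 * mu * (x * D2 A (x, t) + t * D1 A (x, t)) +
          del (x, t) * D1 (D2 A) (x, t)) =ᶠ[𝓝 y] (fun _ => (0 : ℝ)) := by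
        filter_upwards [hU2] with t ht using E3 (x, t) ht
      have h0 := he.deriv_eq
      rw [hF3.deriv] at h0
      simpa using h0
    -- differentiate E2 in the x-direction
    have hF4 : HasDerivAt
        (fun t => 2 * mu * (y * D2 A (t, y) - t * D1 A (t, y)) + del (t, y) * D2 (D2 A) (t, y))
        (2 * mu * (y * D1 (D2 A) (x, y) - (1 * D1 A (x, y) + x * D1 (D1 A) (x, y))) +
          (mu * (2 * x) * D2 (D2 A) (x, y) + del (x, y) * D1 (D2 (D2 A)) (x, y))) x :=
      (((hQx.const_mul y).sub ((hasDerivAt_id x).mul hPx)).const_mul (2 * mu)).add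
        (hdelx.mul ha22x)
    have hD4eq : 2 * mu * (y * D1 (D2 A) (x, y) - (1 * D1 A (x, y) + x * D1 (D1 A) (x, y))) +
          (mu * (2 * x) * D2 (D2 A) (x, y) + del (x, y) * D1 (D2 (D2 A)) (x, y)) = 0 := by
      have he : (fun t => 2 * mu * (y * D2 A (t, y) - t * D1 A (t, y)) +
          del (t, y) * D2 (D2 A) (t, y)) =ᶠ[𝓝 x] (fun _ => (0 : ℝ)) := by
        filter_upwards [hU1] with t ht using E2 (t, y) ht
      have h0 := he.deriv_eq
      rw [hF4.deriv] at h0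
      simpa using h0
    -- symmetry facts
    have hb : D1 (D2 A) (x, y) = D2 (D1 A) (x, y) := hswapA _ hp
    have hTa : D1 (D2 (D1 A)) (x, y) = D2 (D1 (D1 A)) (x, y) := swapD hUopen hsm1 hp
    have hfe : fderiv ℝ (D1 (D2 A)) ((x, y) : ℝ × ℝ) = fderiv ℝ (D2 (D1 A)) (x, y) :=
      Filter.EventuallyEq.fderiv_eq
        ((Set.EqOn.eventuallyEq_of_mem (fun r hr => hswapA r hr) (hUopen.mem_nhds hp)))
    have hT : D1 (D1 (D2 A)) (x, y) = D2 (D1 (D1 A)) (x, y) := by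
      have h' : D1 (D1 (D2 A)) (x, y) = D1 (D2 (D1 A)) (x, y) := by
        show fderiv ℝ (D1 (D2 A)) ((x, y) : ℝ × ℝ) (1, 0) = fderiv ℝ (D2 (D1 A)) (x, y) (1, 0)
        rw [hfe]
      exact h'.trans hTa
    have hS : D1 (D2 (D2 A)) (x, y) = D2 (D1 (D2 A)) (x, y) := swapD hUopen hsm2 hp
    -- rewrite using the symmetries
    rw [← hb] at hD1eq hD3eq
    rw [hT] at hD2eq
    rw [hS] at hD4eq
    -- the equations at the point itself
    have hE1p := E1 (x, y) hp
    have hE2p := E2 (x, y) hp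
    have hE3p := E3 (x, y) hp
    simp only at hE1p hE2p hE3p
    have hdp : del ((x, y) : ℝ × ℝ) = 1 + mu * (x ^ 2 + y ^ 2) := hdel (x, y)
    have h2mu : (2 : ℝ) * mu ≠ 0 := mul_ne_zero two_ne_zero hmu
    -- algebra for D2 A
    have hstepQ : 2 * mu * (x * D1 (D2 A) (x, y) + y * D2 (D2 A) (x, y) + 2 * D2 A (x, y)) = 0 := by
      linear_combination hD2eq - hD1eq
    have hsQ : x * D1 (D2 A) (x, y) + y * D2 (D2 A) (x, y) + 2 * D2 A (x, y) = 0 := by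
      rcases mul_eq_zero.mp hstepQ with h | h
      · exact absurd h h2mu
      · exact h
    have hQ0 : D2 A (x, y) = 0 := by
      linear_combination (del ((x, y) : ℝ × ℝ) / 2) * hsQ - (x / 2) * hE3p - (y / 2) * hE2p -
        (D2 A (x, y)) * hdp
    -- algebra for D1 A
    have hstepP : 2 * mu * (x * D1 (D1 A) (x, y) + y * D1 (D2 A) (x, y) + 2 * D1 A (x, y)) = 0 := by
      linear_combination hD3eq - hD4eq
    have hsP : x * D1 (D1 A) (x, y) + y * D1 (D2 A) (x, y) + 2 * D1 A (x, y) = 0 := by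
      rcases mul_eq_zero.mp hstepP with h | h
      · exact absurd h h2mu
      · exact h
    have hP0 : D1 A (x, y) = 0 := by
      linear_combination (del ((x, y) : ℝ × ℝ) / 2) * hsP - (x / 2) * hE1p - (y / 2) * hE3p -
        (D1 A (x, y)) * hdp
    exact ⟨hP0, hQ0⟩
  -- hence the full derivative vanishes on U
  have hfz : ∀ q ∈ U, fderiv ℝ A q = 0 := by
    intro q hq
    refine ContinuousLinearMap.ext fun v => ?_
    have hv : v = v.1 • ((1 : ℝ), (0 : ℝ)) + v.2 • ((0 : ℝ), (1 : ℝ)) := by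
      ext <;> simp
    rw [hv]
    simp only [map_add, map_smul, ContinuousLinearMap.zero_apply]
    have h1' : fderiv ℝ A q (1, 0) = 0 := (key q hq).1
    have h2' : fderiv ℝ A q (0, 1) = 0 := (key q hq).2
    simp [h1', h2']
  -- A is locally constant on U
  have hloc : ∀ q ∈ U, ∃ ε > 0, Metric.ball q ε ⊆ U ∧ ∀ r ∈ Metric.ball q ε, A r = A q := by
    intro q hq
    obtain ⟨ε, hε, hball⟩ := Metric.isOpen_iff.mp hUopen q hq
    refine ⟨ε, hε, hball, fun r hr => ?_⟩
    have hconv : Convex ℝ (Metric.ball q ε) := convex_ball q ε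
    have hdiff : DifferentiableOn ℝ A (Metric.ball q ε) := fun z hz =>
      ((hsm z (hball hz)).differentiableAt (by simp)).differentiableWithinAt
    have hzero : ∀ z ∈ Metric.ball q ε, fderivWithin ℝ A (Metric.ball q ε) z = 0 := by
      intro z hz
      rw [fderivWithin_of_isOpen Metric.isOpen_ball hz]
      exact hfz z (hball hz)
    exact hconv.is_const_of_fderivWithin_eq_zero hdiff hzero hr (Metric.mem_ball_self hε)
  -- conclude by connectedness
  obtain ⟨p₀, hp₀⟩ := hUconn.nonempty
  refine ⟨A p₀, ?_⟩
  by_contra hcon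
  push_neg at hcon
  obtain ⟨q₀, hq₀U, hq₀⟩ := hcon
  have hSopen : IsOpen {r : ℝ × ℝ | r ∈ U ∧ A r = A p₀} := by
    rw [Metric.isOpen_iff]
    rintro r ⟨hrU, hrA⟩
    obtain ⟨ε, hε, hballU, hconst⟩ := hloc r hrU
    exact ⟨ε, hε, fun z hz => ⟨hballU hz, (hconst z hz).trans hrA⟩⟩
  have hTopen : IsOpen {r : ℝ × ℝ | r ∈ U ∧ A r ≠ A p₀} := by
    rw [Metric.isOpen_iff]
    rintro r ⟨hrU, hrA⟩
    obtain ⟨ε, hε, hballU, hconst⟩ := hloc r hrU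
    exact ⟨ε, hε, fun z hz => ⟨hballU hz, by rw [hconst z hz]; exact hrA⟩⟩
  have hsub : U ⊆ {r : ℝ × ℝ | r ∈ U ∧ A r = A p₀} ∪ {r : ℝ × ℝ | r ∈ U ∧ A r ≠ A p₀} := by
    intro r hr
    by_cases h : A r = A p₀
    · exact Or.inl ⟨hr, h⟩
    · exact Or.inr ⟨hr, h⟩
  have hne1 : (U ∩ {r : ℝ × ℝ | r ∈ U ∧ A r = A p₀}).Nonempty := ⟨p₀, hp₀, hp₀, rfl⟩
  have hne2 : (U ∩ {r : ℝ × ℝ | r ∈ U ∧ A r ≠ A p₀}).Nonempty := ⟨q₀, hq₀U, hq₀U, hq₀⟩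
  obtain ⟨z, _, ⟨_, hz1⟩, ⟨_, hz2⟩⟩ :=
    hUconn.isPreconnected _ _ hSopen hTopen hsub hne1 hne2
  exact hz2 hz1
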